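/- arXiv:2209.09134 — 3 statements merged into one kernel-verified Lean document; each statement's English description precedes it below -/
import Mathlib

section
/- For every k ≥ 2, every θ ∈ [π/3, 2π/3], and every θ̇ ∈ [−1,1]: if cos θ − 1/2 − k sin θ · θ̇ = 0, then −sin θ·θ̇ − k cos θ·θ̇² − k sin θ < 0. -/
open Real

theorem one_dof_safety_index_feasible (k θ θd : ℝ) (hk : 2 ≤ k)
    (hθ : θ ∈ Set.Icc (π / 3) (2 * π / 3)) (hθd : θd ∈ Set.Icc (-1 : ℝ) 1)
    (hφ : Real.cos θ - 1 / 2 - k * Real.sin θ * θd = 0) :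
    -Real.sin θ * θd - k * Real.cos θ * θd ^ 2 - k * Real.sin θ < 0 := by
  obtain ⟨h1, h2⟩ := hθ
  obtain ⟨hd1, hd2⟩ := hθd
  have hπ := Real.pi_pos
  have hθ0 : 0 ≤ θ := by linarith
  have hθπ : θ ≤ π := by linarith
  have hc1 : Real.cos θ ≤ 1 / 2 := by
    have := Real.cos_le_cos_of_nonneg_of_le_pi (by positivity) hθπ h1
    rwa [Real.cos_pi_div_three] at this
  have hc2 : -(1 / 2) ≤ Real.cos θ := by
    have := Real.cos_le_cos_of_nonneg_of_le_pi hθ0 (by linarith) h2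
    have h23 : Real.cos (2 * π / 3) = -(1/2) := by
      have : (2 * π / 3 : ℝ) = π - π / 3 := by ring
      rw [this, Real.cos_pi_sub, Real.cos_pi_div_three]
    linarith [this, h23.symm ▸ this]
  have hs0 : 0 ≤ Real.sin θ := Real.sin_nonneg_of_nonneg_of_le_pi hθ0 hθπ
  have hs2 : Real.sin θ ^ 2 ≥ 3 / 4 := by
    have := Real.sin_sq_add_cos_sq θ
    nlinarith
  have hs : Real.sin θ ≥ 0.86 := by nlinarith
  have e1 : -Real.sin θ * θd ≤ 1 / 2 := by nlinarith
  have e2 : θd ^ 2 ≤ 1 := by nlinarith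
  have hk0 : (0:ℝ) ≤ k := by linarith
  have e3 : -(k * Real.cos θ * θd ^ 2) ≤ k / 2 := by
    nlinarith [mul_nonneg (mul_nonneg hk0 (by linarith : (0:ℝ) ≤ Real.cos θ + 1/2)) (sq_nonneg θd),
      mul_nonneg hk0 (by linarith : (0:ℝ) ≤ 1 - θd ^ 2)]
  nlinarith
end

section
/- Suppose x₁, x₂, x₃ ∈ ℝ satisfy x₁ ≥ √3/2, x₁ ≤ 1, 1 − x₃² ≥ 0, x₂ − 1/2 − k x₁ x₃ = 0, and x₁² + x₂² − 1 = 0 for some fixed k ≥ 2. Then −x₁x₃ − k x₂ x₃² − k x₁ < 0 (i.e., the refute set with the reversed inequality −x₁x₃ − k x₂x₃² − k x₁ ≥ 0 is empty). -/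
/-!
Put `u = k x₁ x₃`, so that `x₂ = 1/2 + u`. Since `x₁² ≥ 3/4`, the circle constraint forces
`|x₂| ≤ 1/2`, i.e. `-1 ≤ u ≤ 0`. With `k ≥ 2` this bounds the three terms of the target:
`-x₁ x₃ = -u/k ≤ 1/2`, `-k x₂ x₃² ≤ k x₃²/2 = u²/(2 k x₁²) ≤ 1/3`, while `k x₁ ≥ 2 x₁ > 5/6`.
-/

lemma three_quarters_le_sq_of_sqrt_three_div_two_le {x : ℝ} (hx : √3 / 2 ≤ x) :
    3 / 4 ≤ x ^ 2 := by
  have hsqrt : 0 ≤ √3 / 2 := by positivity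
  calc (3 : ℝ) / 4 = (√3 / 2) ^ 2 := by rw [div_pow, Real.sq_sqrt zero_le_three]; norm_num
    _ ≤ x ^ 2 := pow_le_pow_left₀ hsqrt hx 2

lemma abs_le_half_of_sq_add_sq_eq_one {x y : ℝ} (hx : 3 / 4 ≤ x ^ 2) (h : x ^ 2 + y ^ 2 = 1) :
    |y| ≤ 1 / 2 :=
  abs_le_of_sq_le_sq (by linarith) (by norm_num)

lemma neg_mul_sub_mul_sq_sub_mul_neg {k x y : ℝ} (hk : 2 ≤ k) (hx : 3 / 4 ≤ x ^ 2) (hx₀ : 0 < x)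
    (hu₁ : -1 ≤ k * x * y) (hu₀ : k * x * y ≤ 0) :
    -x * y - k * (1 / 2 + k * x * y) * y ^ 2 - k * x < 0 := by
  have hy : y ≤ 0 := nonpos_of_mul_nonpos_right hu₀ (by positivity)
  have hxy : -x * y ≤ 1 / 2 := by nlinarith [mul_nonneg hx₀.le (neg_nonneg.mpr hy)]
  have hky : k * y ^ 2 ≤ 2 / 3 := by
    have hu_sq : (k * y ^ 2) * (k * x ^ 2) ≤ 1 := by nlinarith
    nlinarith [sq_nonneg y]
  have hcubic : -k * (1 / 2 + k * x * y) * y ^ 2 ≤ 1 / 3 := by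
    nlinarith [mul_nonneg (neg_le_iff_add_nonneg.mp hu₁) (by positivity : 0 ≤ k * y ^ 2)]
  have hkx : 5 / 6 < k * x := by nlinarith
  linarith

theorem one_dof_refute_set_empty_general (k x₁ x₂ x₃ : ℝ) (hk : 2 ≤ k)
    (h₂ : Real.sqrt 3 / 2 ≤ x₁)
    (h₅ : x₂ - 1 / 2 - k * x₁ * x₃ = 0) (h₆ : x₁ ^ 2 + x₂ ^ 2 - 1 = 0) :
    -x₁ * x₃ - k * x₂ * x₃ ^ 2 - k * x₁ < 0 := by
  have hx₁ : 3 / 4 ≤ x₁ ^ 2 := three_quarters_le_sq_of_sqrt_three_div_two_le h₂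
  have hx₁₀ : 0 < x₁ := lt_of_lt_of_le (by positivity) h₂
  have hx₂ : x₂ = 1 / 2 + k * x₁ * x₃ := by linarith
  have hu : -1 ≤ k * x₁ * x₃ ∧ k * x₁ * x₃ ≤ 0 := by
    have := abs_le.mp (abs_le_half_of_sq_add_sq_eq_one (y := x₂) hx₁ (by linarith))
    constructor <;> linarith
  rw [hx₂]
  exact neg_mul_sub_mul_sq_sub_mul_neg hk hx₁ hx₁₀ hu.1 hu.2

theorem one_dof_refute_set_empty (k x₁ x₂ x₃ : ℝ) (hk : 2 ≤ k)
    (h₂ : Real.sqrt 3 / 2 ≤ x₁) (h₃ : x₁ ≤ 1) (h₄ : 0 ≤ 1 - x₃ ^ 2)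
    (h₅ : x₂ - 1 / 2 - k * x₁ * x₃ = 0) (h₆ : x₁ ^ 2 + x₂ ^ 2 - 1 = 0) :
    -x₁ * x₃ - k * x₂ * x₃ ^ 2 - k * x₁ < 0 :=
  one_dof_refute_set_empty_general k x₁ x₂ x₃ hk h₂ h₅ h₆
end

section
/- If for every sign pattern (N, M) partitioning {1,...,m}, the set {x ∈ X : L_f(x) + ∑_{i∈N} L_g^i(x) a_i + ∑_{i∈M} L_g^i(x) b_i ≥ 0, L_g^i(x) ≥ 0 for i ∈ N, L_g^i(x) ≤ 0 for i ∈ M, φ(x) = 0} is empty, then for every x ∈ X with φ(x) = 0 we have min_{u ∈ ∏[a_i,b_i]} (L_f(x) + ⟨L_g(x), u⟩) < 0. -/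
theorem refute_sets_empty_implies_local_manifold_positiveness {n m : ℕ}
    (X : Set (Fin n → ℝ)) (φ : (Fin n → ℝ) → ℝ)
    (Lf : (Fin n → ℝ) → ℝ) (Lg : (Fin n → ℝ) → Fin m → ℝ)
    (a b : Fin m → ℝ) (hab : ∀ i, a i ≤ b i)
    (hrefute : ∀ N M : Finset (Fin m), Disjoint N M → N ∪ M = Finset.univ →
      {x ∈ X | 0 ≤ Lf x + ∑ i ∈ N, Lg x i * a i + ∑ i ∈ M, Lg x i * b i ∧
          (∀ i ∈ N, 0 ≤ Lg x i) ∧ (∀ i ∈ M, Lg x i ≤ 0) ∧ φ x = 0} = ∅) :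
    ∀ x ∈ X, φ x = 0 →
      sInf ((fun u : Fin m → ℝ => Lf x + ∑ i, Lg x i * u i) ''
        {u | ∀ i, u i ∈ Set.Icc (a i) (b i)}) < 0 := by
  intro x hx hφ
  set N : Finset (Fin m) := Finset.univ.filter (fun i => 0 ≤ Lg x i) with hN
  set M : Finset (Fin m) := Finset.univ.filter (fun i => ¬ 0 ≤ Lg x i) with hM
  have hdisj : Disjoint N M := by
    simp [hN, hM, Finset.disjoint_filter]
  have hunion : N ∪ M = Finset.univ := by
    rw [hN, hM]; exact Finset.filter_union_filter_not_eq _ _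
  have hempty := hrefute N M hdisj hunion
  have hkey : Lf x + ∑ i ∈ N, Lg x i * a i + ∑ i ∈ M, Lg x i * b i < 0 := by
    by_contra hcon
    push_neg at hcon
    have : x ∈ ({x ∈ X | 0 ≤ Lf x + ∑ i ∈ N, Lg x i * a i + ∑ i ∈ M, Lg x i * b i ∧
          (∀ i ∈ N, 0 ≤ Lg x i) ∧ (∀ i ∈ M, Lg x i ≤ 0) ∧ φ x = 0} : Set (Fin n → ℝ)) := by
      refine ⟨hx, hcon, ?_, ?_, hφ⟩
      · intro i hi; simpa [hN] using (Finset.mem_filter.mp hi).2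
      · intro i hi
        have := (Finset.mem_filter.mp hi).2
        linarith [not_le.mp this]
    rw [hempty] at this
    exact this
  -- the witness control
  set u : Fin m → ℝ := fun i => if 0 ≤ Lg x i then a i else b i with hu
  have humem : u ∈ {u : Fin m → ℝ | ∀ i, u i ∈ Set.Icc (a i) (b i)} := by
    intro i
    by_cases h : 0 ≤ Lg x i <;> simp [hu, h, hab i, le_refl]
  have hval : Lf x + ∑ i, Lg x i * u i =
      Lf x + ∑ i ∈ N, Lg x i * a i + ∑ i ∈ M, Lg x i * b i := by
    have : ∑ i, Lg x i * u i = ∑ i ∈ N, Lg x i * a i + ∑ i ∈ M, Lg x i * b i := by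
      rw [hN, hM, ← Finset.sum_filter_add_sum_filter_not Finset.univ (fun i => 0 ≤ Lg x i)
        (fun i => Lg x i * u i)]
      congr 1
      · apply Finset.sum_congr rfl
        intro i hi
        have := (Finset.mem_filter.mp hi).2
        simp [hu, this]
      · apply Finset.sum_congr rfl
        intro i hi
        have := (Finset.mem_filter.mp hi).2
        simp [hu, this]
    rw [this]; ring
  have hmem : Lf x + ∑ i, Lg x i * u i ∈
      ((fun u : Fin m → ℝ => Lf x + ∑ i, Lg x i * u i) ''
        {u | ∀ i, u i ∈ Set.Icc (a i) (b i)}) := ⟨u, humem, rfl⟩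
  have hbdd : BddBelow ((fun u : Fin m → ℝ => Lf x + ∑ i, Lg x i * u i) ''
        {u | ∀ i, u i ∈ Set.Icc (a i) (b i)}) := by
    refine ⟨Lf x + ∑ i, min (Lg x i * a i) (Lg x i * b i), ?_⟩
    rintro y ⟨v, hv, rfl⟩
    have : ∀ i : Fin m, min (Lg x i * a i) (Lg x i * b i) ≤ Lg x i * v i := by
      intro i
      rcases le_or_gt 0 (Lg x i) with h | h
      · exact le_trans (min_le_left _ _) (mul_le_mul_of_nonneg_left (hv i).1 h)
      · exact le_trans (min_le_right _ _)
          (mul_le_mul_of_nonpos_left (hv i).2 h.le)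
    have := Finset.sum_le_sum (s := Finset.univ) (fun i _ => this i)
    simpa using add_le_add_left this (Lf x)
  calc sInf _ ≤ Lf x + ∑ i, Lg x i * u i := csInf_le hbdd hmem
    _ < 0 := by rw [hval]; exact hkey
end
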